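/- arXiv:0810.2091 — 6 statements merged into one kernel-verified Lean document; each statement's English description precedes it below -/
import Mathlib

section
/- Let H be an n-dimensional complex Hilbert space, and let (e_j)_{1≤j≤n} and (f_j)_{1≤j≤n} be two families of pairwise orthogonal rank-one orthogonal projections on H, each summing to the identity. Assume that e_i f_j ≠ 0 whenever i = 1 or j = 1. Then there exist orthonormal bases (ξ_j)_{1≤j≤n} and (η_j)_{1≤j≤n} of H such that (a) e_j ξ_j = ξ_j and f_j η_j = η_j for all j, and (b) the inner product ⟨ξ_j, η_i⟩ is a strictly positive real number whenever i = 1 or j = 1; this pair of bases is unique up to replacing (ξ_j, η_j) by (λξ_j, λη_j) for a single complex number λ with |λ| = 1; moreover the unique unitary operator U on H with Uξ_j = η_j for all j satisfies U e_j U* = f_j for all j. -/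
noncomputable section

open scoped ComplexInnerProductSpace ComplexConjugate

def IsPosReal (z : ℂ) : Prop := 0 < z.re ∧ z.im = 0

/-!
A self-adjoint operator with one-dimensional range that fixes a unit vector `x` is
`rankOne x x`; hence the unit vectors it fixes are exactly the unimodular multiples of `x`, and
a family of such projections with pairwise products zero and sum one is the family of
projections onto an orthonormal basis. So both bases are determined up to one phase per vector.
Choose the phase of each `η i` to make `⟪ξ 0, η i⟫` positive and then the phase of each `ξ j` to
make `⟪ξ j, η 0⟫` positive; the second step leaves `ξ 0` alone. If another choice of phases
`a j`, `b i` keeps `⟪a j • ξ j, b i • η i⟫` positive on the first row and column, then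
`a j = b 0` for all `j` and `b i = a 0` for all `i`, so all phases agree. The operator sending
one orthonormal basis to another is unitary and conjugates `rankOne ξ ξ` to
`rankOne (U ξ) (U ξ)`.
-/

open InnerProductSpace ContinuousLinearMap

section RankOneProjection

variable {𝕜 E : Type*} [RCLike 𝕜] [NormedAddCommGroup E] [InnerProductSpace 𝕜 E]

theorem exists_norm_eq_one_apply_eq_self {p : E →L[𝕜] E} (hp : IsIdempotentElem p)
    (hr : Module.finrank 𝕜 (LinearMap.range (p : E →ₗ[𝕜] E)) = 1) :
    ∃ x, ‖x‖ = 1 ∧ p x = x := by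
  obtain ⟨_, ⟨w, rfl⟩, hw⟩ := Submodule.exists_mem_ne_zero_of_ne_bot
    (p := LinearMap.range (p : E →ₗ[𝕜] E))
    (by rintro h; rw [h, finrank_bot] at hr; exact zero_ne_one hr)
  refine ⟨(‖p w‖⁻¹ : 𝕜) • p w, norm_smul_inv_norm hw, ?_⟩
  simp only [map_smul, ← mul_apply_eq_comp, hp.eq]

theorem inner_ne_zero_of_rankOne_mul_rankOne_ne_zero {x y : E}
    (h : rankOne 𝕜 x x * rankOne 𝕜 y y ≠ 0) : ⟪x, y⟫_𝕜 ≠ 0 := by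
  rintro hxy
  simp [mul_def, rankOne_comp_rankOne, hxy] at h

theorem exists_norm_eq_one_eq_smul_of_rankOne_apply_eq_self {x y : E} (hx : ‖x‖ = 1)
    (hy : ‖y‖ = 1) (h : rankOne 𝕜 x x y = y) : ∃ c : 𝕜, ‖c‖ = 1 ∧ y = c • x := by
  refine ⟨⟪x, y⟫_𝕜, ?_, h.symm⟩
  rw [← h, rankOne_apply, norm_smul, hx, mul_one] at hy
  exact hy

theorem span_range_eq_top_of_sum_rankOne_eq_one {ι : Type*} [Fintype ι] {v : ι → E}
    (h : ∑ i, rankOne 𝕜 (v i) (v i) = 1) : Submodule.span 𝕜 (Set.range v) = ⊤ := by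
  refine Submodule.eq_top_iff'.2 fun z => ?_
  have hz : z = ∑ i, ⟪v i, z⟫_𝕜 • v i := by
    simpa using (congrArg (fun q : E →L[𝕜] E => q z) h).symm
  rw [hz]
  exact Submodule.sum_mem _ fun i _ => Submodule.smul_mem _ _ (Submodule.subset_span ⟨i, rfl⟩)

variable [CompleteSpace E]

theorem eq_rankOne_self_of_apply_eq_self {p : E →L[𝕜] E} (hs : IsSelfAdjoint p)
    (hr : Module.finrank 𝕜 (LinearMap.range (p : E →ₗ[𝕜] E)) = 1) {x : E} (hx : ‖x‖ = 1)
    (hpx : p x = x) : p = rankOne 𝕜 x x := by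
  have hx0 : x ≠ 0 := by rintro rfl; simp at hx
  have := Module.finite_of_finrank_eq_succ hr
  have hrange : 𝕜 ∙ x = LinearMap.range (p : E →ₗ[𝕜] E) :=
    Submodule.eq_of_le_of_finrank_le ((Submodule.span_singleton_le_iff_mem _ _).2 ⟨x, hpx⟩)
      (by rw [hr, finrank_span_singleton hx0])
  ext z
  obtain ⟨c, hc⟩ := Submodule.mem_span_singleton.1 (hrange ▸ LinearMap.mem_range_self _ z)
  have hc' : c = ⟪x, z⟫_𝕜 := calc
    c = ⟪x, c • x⟫_𝕜 := by simp [inner_smul_right, inner_self_eq_norm_sq_to_K, hx]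
    _ = ⟪p x, z⟫_𝕜 := by rw [hc, coe_coe, ← adjoint_inner_left, hs.adjoint_eq]
    _ = ⟪x, z⟫_𝕜 := by rw [hpx]
  rw [rankOne_apply, ← hc', hc, coe_coe]

theorem orthonormal_of_mul_eq_zero {ι : Type*} {p : ι → E →L[𝕜] E}
    (hs : ∀ i, IsSelfAdjoint (p i)) (ho : ∀ i j, i ≠ j → p i * p j = 0) {v : ι → E}
    (hv : ∀ i, ‖v i‖ = 1) (hpv : ∀ i, p i (v i) = v i) : Orthonormal 𝕜 v := by
  refine ⟨hv, fun i j hij => ?_⟩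
  calc ⟪v i, v j⟫_𝕜 = ⟪p i (v i), p j (v j)⟫_𝕜 := by rw [hpv, hpv]
    _ = ⟪v i, (p i * p j) (v j)⟫_𝕜 := by rw [← adjoint_inner_right, (hs i).adjoint_eq]; rfl
    _ = 0 := by rw [ho i j hij, zero_apply, inner_zero_right]

theorem orthonormal_and_span_eq_top_of_rankOne_projections {ι : Type*} [Fintype ι]
    {p : ι → E →L[𝕜] E} (hs : ∀ i, IsSelfAdjoint (p i))
    (hr : ∀ i, Module.finrank 𝕜 (LinearMap.range (p i : E →ₗ[𝕜] E)) = 1)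
    (ho : ∀ i j, i ≠ j → p i * p j = 0) (hsum : ∑ i, p i = 1) {v : ι → E}
    (hv : ∀ i, ‖v i‖ = 1) (hpv : ∀ i, p i (v i) = v i) :
    Orthonormal 𝕜 v ∧ Submodule.span 𝕜 (Set.range v) = ⊤ := by
  refine ⟨orthonormal_of_mul_eq_zero hs ho hv hpv, span_range_eq_top_of_sum_rankOne_eq_one ?_⟩
  rw [← hsum]
  exact Finset.sum_congr rfl fun i _ =>
    (eq_rankOne_self_of_apply_eq_self (hs i) (hr i) (hv i) (hpv i)).symm

end RankOneProjection

section Unitary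

variable {𝕜 E F : Type*} [RCLike 𝕜] [NormedAddCommGroup E] [InnerProductSpace 𝕜 E]
  [NormedAddCommGroup F] [InnerProductSpace 𝕜 F]

namespace OrthonormalBasis

variable {ι : Type*} [Fintype ι] (b : OrthonormalBasis ι 𝕜 E) (b' : OrthonormalBasis ι 𝕜 F)

theorem existsUnique_apply_eq : ∃! U : E →L[𝕜] F, ∀ i, U (b i) = b' i := by
  refine ⟨b.equiv b' (.refl ι), fun i => by simp, fun U hU => ?_⟩
  refine coe_injective (b.toBasis.ext fun i => ?_)
  simp [hU]

variable [CompleteSpace E] [CompleteSpace F]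

theorem adjoint_comp_self_and_comp_adjoint_of_apply_eq {U : E →L[𝕜] F}
    (hU : ∀ i, U (b i) = b' i) : adjoint U ∘L U = 1 ∧ U ∘L adjoint U = 1 := by
  obtain rfl : U = b.equiv b' (.refl ι) :=
    (b.existsUnique_apply_eq b').unique hU fun i => by simp
  rw [LinearIsometryEquiv.adjoint_eq_symm]
  constructor <;> ext <;> simp [-equiv_symm]

end OrthonormalBasis

variable [CompleteSpace E] [CompleteSpace F]

theorem comp_rankOne_comp_adjoint (U : E →L[𝕜] F) (x y : E) :
    U ∘L rankOne 𝕜 x y ∘L adjoint U = rankOne 𝕜 (U x) (U y) := by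
  rw [rankOne_comp, adjoint_adjoint, comp_rankOne]

end Unitary

section Phase

theorem IsPosReal.eq_one {z : ℂ} (h : IsPosReal z) (hz : ‖z‖ = 1) : z = 1 := by
  rw [Complex.norm_def, Real.sqrt_eq_one, Complex.normSq_apply, h.2] at hz
  apply Complex.ext <;> simp only [Complex.one_re, Complex.one_im, h.2]
  nlinarith [h.1]

theorem IsPosReal.of_mul_right {w p : ℂ} (hp : IsPosReal p) (h : IsPosReal (w * p)) :
    IsPosReal w := by
  obtain ⟨hre, him⟩ := h
  rw [Complex.mul_re, hp.2, mul_zero, sub_zero] at hre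
  rw [Complex.mul_im, hp.2, mul_zero, zero_add] at him
  exact ⟨pos_of_mul_pos_left hre hp.1.le, (mul_eq_zero.1 him).resolve_right hp.1.ne'⟩

theorem exists_norm_eq_one_isPosReal_mul {z : ℂ} (hz : z ≠ 0) :
    ∃ c : ℂ, ‖c‖ = 1 ∧ IsPosReal (c * z) := by
  have hz' : 0 < ‖z‖ := norm_pos_iff.2 hz
  refine ⟨conj z / ‖z‖, ?_, ?_⟩
  · rw [norm_div, Complex.norm_conj, Complex.norm_real, norm_norm, div_self hz'.ne']
  · rw [div_mul_eq_mul_div, Complex.conj_mul', ← Complex.ofReal_pow, ← Complex.ofReal_div,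
      sq, mul_self_div_self]
    exact ⟨by simpa using hz', Complex.ofReal_im _⟩

variable {E : Type*} [NormedAddCommGroup E] [InnerProductSpace ℂ E]

theorem eq_of_isPosReal_inner_smul_smul {a b : ℂ} (ha : ‖a‖ = 1) (hb : ‖b‖ = 1) {x y : E}
    (h : IsPosReal ⟪x, y⟫) (h' : IsPosReal ⟪a • x, b • y⟫) : a = b := by
  rw [inner_smul_left, inner_smul_right, ← mul_assoc] at h'
  have hab : conj a * b = 1 :=
    (h.of_mul_right h').eq_one (by rw [norm_mul, Complex.norm_conj, ha, hb, one_mul])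
  calc a = a * (conj a * b) := by rw [hab, mul_one]
    _ = (‖a‖ : ℂ) ^ 2 * b := by rw [← mul_assoc, Complex.mul_conj']
    _ = b := by rw [ha]; simp

variable {ι : Type*} (i0 : ι) {x y : ι → E}

theorem exists_phases_isPosReal_inner_smul_smul
    (h : ∀ i j, (i = i0 ∨ j = i0) → ⟪x j, y i⟫ ≠ 0) :
    ∃ a b : ι → ℂ, (∀ j, ‖a j‖ = 1) ∧ (∀ i, ‖b i‖ = 1) ∧
      ∀ i j, (i = i0 ∨ j = i0) → IsPosReal ⟪a j • x j, b i • y i⟫ := by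
  choose b hb hby using fun i => exists_norm_eq_one_isPosReal_mul (h i i0 (.inr rfl))
  have hright : ∀ i, IsPosReal ⟪x i0, b i • y i⟫ := fun i => by
    rw [inner_smul_right]
    exact hby i
  have hx : ∀ j, ⟪x j, b i0 • y i0⟫ ≠ 0 := fun j => by
    rw [inner_smul_right]
    exact mul_ne_zero (norm_ne_zero_iff.1 (by rw [hb]; exact one_ne_zero)) (h i0 j (.inl rfl))
  choose c hc hcx using fun j => exists_norm_eq_one_isPosReal_mul (hx j)
  have hleft : ∀ j, IsPosReal ⟪conj (c j) • x j, b i0 • y i0⟫ := fun j => by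
    rw [inner_smul_left, Complex.conj_conj]
    exact hcx j
  have hc0 : conj (c i0) = 1 :=
    eq_of_isPosReal_inner_smul_smul (by rw [Complex.norm_conj, hc]) norm_one (hright i0)
      (by rw [one_smul]; exact hleft i0)
  refine ⟨fun j => conj (c j), b, fun j => by rw [Complex.norm_conj, hc], hb, ?_⟩
  rintro i j (rfl | rfl)
  · exact hleft j
  · dsimp only
    rw [hc0, one_smul]
    exact hright i

theorem exists_isPosReal_inner_of_mul_ne_zero [CompleteSpace E] {e f : ι → E →L[ℂ] E}
    (heI : ∀ j, IsIdempotentElem (e j)) (heS : ∀ j, IsSelfAdjoint (e j))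
    (heR : ∀ j, Module.finrank ℂ (LinearMap.range (e j : E →ₗ[ℂ] E)) = 1)
    (hfI : ∀ j, IsIdempotentElem (f j)) (hfS : ∀ j, IsSelfAdjoint (f j))
    (hfR : ∀ j, Module.finrank ℂ (LinearMap.range (f j : E →ₗ[ℂ] E)) = 1)
    (h : ∀ i j, (i = i0 ∨ j = i0) → e i * f j ≠ 0) :
    ∃ ξ η : ι → E, (∀ j, ‖ξ j‖ = 1) ∧ (∀ i, ‖η i‖ = 1) ∧
      (∀ j, e j (ξ j) = ξ j) ∧ (∀ i, f i (η i) = η i) ∧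
      ∀ i j, (i = i0 ∨ j = i0) → IsPosReal ⟪ξ j, η i⟫ := by
  choose x hx hex using fun j => exists_norm_eq_one_apply_eq_self (heI j) (heR j)
  choose y hy hfy using fun j => exists_norm_eq_one_apply_eq_self (hfI j) (hfR j)
  have hxy : ∀ i j, (i = i0 ∨ j = i0) → ⟪x j, y i⟫ ≠ 0 := fun i j hij =>
    inner_ne_zero_of_rankOne_mul_rankOne_ne_zero <| by
      rw [← eq_rankOne_self_of_apply_eq_self (heS j) (heR j) (hx j) (hex j),
        ← eq_rankOne_self_of_apply_eq_self (hfS i) (hfR i) (hy i) (hfy i)]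
      exact h j i hij.symm
  obtain ⟨a, b, ha, hb, hpos⟩ := exists_phases_isPosReal_inner_smul_smul i0 hxy
  exact ⟨fun j => a j • x j, fun i => b i • y i, fun j => by simp [norm_smul, ha, hx],
    fun i => by simp [norm_smul, hb, hy], fun j => by simp [hex], fun i => by simp [hfy], hpos⟩

theorem exists_eq_smul_of_isPosReal_inner [CompleteSpace E] {ξ η ξ' η' : ι → E}
    (hξ : ∀ j, ‖ξ j‖ = 1) (hη : ∀ i, ‖η i‖ = 1) (hξ' : ∀ j, ‖ξ' j‖ = 1) (hη' : ∀ i, ‖η' i‖ = 1)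
    (hξξ' : ∀ j, rankOne ℂ (ξ j) (ξ j) (ξ' j) = ξ' j)
    (hηη' : ∀ i, rankOne ℂ (η i) (η i) (η' i) = η' i)
    (h : ∀ i j, (i = i0 ∨ j = i0) → IsPosReal ⟪ξ j, η i⟫)
    (h' : ∀ i j, (i = i0 ∨ j = i0) → IsPosReal ⟪ξ' j, η' i⟫) :
    ∃ c : ℂ, ‖c‖ = 1 ∧ (∀ j, ξ' j = c • ξ j) ∧ ∀ i, η' i = c • η i := by
  choose a ha hξa using fun j =>
    exists_norm_eq_one_eq_smul_of_rankOne_apply_eq_self (hξ j) (hξ' j) (hξξ' j)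
  choose b hb hηb using fun i =>
    exists_norm_eq_one_eq_smul_of_rankOne_apply_eq_self (hη i) (hη' i) (hηη' i)
  have hab : ∀ i j, (i = i0 ∨ j = i0) → IsPosReal ⟪a j • ξ j, b i • η i⟫ := fun i j hij => by
    rw [← hξa, ← hηb]
    exact h' i j hij
  have hcol : ∀ j, a j = b i0 := fun j =>
    eq_of_isPosReal_inner_smul_smul (ha j) (hb i0) (h i0 j (.inl rfl)) (hab i0 j (.inl rfl))
  have hrow : ∀ i, b i = a i0 := fun i =>
    (eq_of_isPosReal_inner_smul_smul (ha i0) (hb i) (h i i0 (.inr rfl))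
      (hab i i0 (.inr rfl))).symm
  exact ⟨b i0, hb i0, fun j => by rw [hξa, hcol], fun i => by rw [hηb, hrow, hcol]⟩

end Phase

theorem stmt0_general {n : ℕ} (hn : 0 < n) {H : Type} [NormedAddCommGroup H]
    [InnerProductSpace ℂ H] [FiniteDimensional ℂ H]
    (e f : Fin n → H →L[ℂ] H)
    (heI : ∀ j, IsIdempotentElem (e j)) (heS : ∀ j, IsSelfAdjoint (e j))
    (heR : ∀ j, Module.finrank ℂ (LinearMap.range ((e j : H →L[ℂ] H) : H →ₗ[ℂ] H)) = 1)
    (heO : ∀ i j, i ≠ j → e i * e j = 0) (heSum : ∑ j, e j = 1)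
    (hfI : ∀ j, IsIdempotentElem (f j)) (hfS : ∀ j, IsSelfAdjoint (f j))
    (hfR : ∀ j, Module.finrank ℂ (LinearMap.range ((f j : H →L[ℂ] H) : H →ₗ[ℂ] H)) = 1)
    (hfO : ∀ i j, i ≠ j → f i * f j = 0) (hfSum : ∑ j, f j = 1)
    (hgen : ∀ i j : Fin n, (i = ⟨0, hn⟩ ∨ j = ⟨0, hn⟩) → e i * f j ≠ 0) :
    ∃ ξ η : Fin n → H,
      (Orthonormal ℂ ξ ∧ Submodule.span ℂ (Set.range ξ) = ⊤) ∧
      (Orthonormal ℂ η ∧ Submodule.span ℂ (Set.range η) = ⊤) ∧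
      (∀ j, e j (ξ j) = ξ j) ∧ (∀ j, f j (η j) = η j) ∧
      (∀ i j : Fin n, (i = ⟨0, hn⟩ ∨ j = ⟨0, hn⟩) → IsPosReal ⟪ξ j, η i⟫) ∧
      (∀ ξ' η' : Fin n → H,
        Orthonormal ℂ ξ' → Submodule.span ℂ (Set.range ξ') = ⊤ →
        Orthonormal ℂ η' → Submodule.span ℂ (Set.range η') = ⊤ →
        (∀ j, e j (ξ' j) = ξ' j) → (∀ j, f j (η' j) = η' j) →
        (∀ i j : Fin n, (i = ⟨0, hn⟩ ∨ j = ⟨0, hn⟩) → IsPosReal ⟪ξ' j, η' i⟫) →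
        ∃ lam : ℂ, ‖lam‖ = 1 ∧ (∀ j, ξ' j = lam • ξ j) ∧ (∀ j, η' j = lam • η j)) ∧
      (∃! U : H →L[ℂ] H, ∀ j, U (ξ j) = η j) ∧
      (∀ U : H →L[ℂ] H, (∀ j, U (ξ j) = η j) →
        (ContinuousLinearMap.adjoint U ∘L U = 1 ∧ U ∘L ContinuousLinearMap.adjoint U = 1 ∧
          ∀ j, U ∘L e j ∘L ContinuousLinearMap.adjoint U = f j)) := by
  obtain ⟨ξ, η, hξ, hη, heξ, hfη, hpos⟩ :=
    exists_isPosReal_inner_of_mul_ne_zero (⟨0, hn⟩ : Fin n) heI heS heR hfI hfS hfR hgen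
  have he : ∀ j, e j = rankOne ℂ (ξ j) (ξ j) := fun j =>
    eq_rankOne_self_of_apply_eq_self (heS j) (heR j) (hξ j) (heξ j)
  have hf : ∀ i, f i = rankOne ℂ (η i) (η i) := fun i =>
    eq_rankOne_self_of_apply_eq_self (hfS i) (hfR i) (hη i) (hfη i)
  obtain ⟨hξON, hξsp⟩ :=
    orthonormal_and_span_eq_top_of_rankOne_projections heS heR heO heSum hξ heξ
  obtain ⟨hηON, hηsp⟩ :=
    orthonormal_and_span_eq_top_of_rankOne_projections hfS hfR hfO hfSum hη hfη
  set bξ := OrthonormalBasis.mk hξON hξsp.ge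
  set bη := OrthonormalBasis.mk hηON hηsp.ge
  refine ⟨ξ, η, ⟨hξON, hξsp⟩, ⟨hηON, hηsp⟩, heξ, hfη, hpos, ?_, ?_, fun U hU => ?_⟩
  · intro ξ' η' hξ'ON _ hη'ON _ heξ' hfη' hpos'
    exact exists_eq_smul_of_isPosReal_inner (⟨0, hn⟩ : Fin n) hξ hη hξ'ON.1 hη'ON.1
      (fun j => he j ▸ heξ' j) (fun i => hf i ▸ hfη' i) hpos hpos'
  · simpa [bξ, bη] using bξ.existsUnique_apply_eq bη
  · obtain ⟨hUU, hUU'⟩ := bξ.adjoint_comp_self_and_comp_adjoint_of_apply_eq bη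
      (by simpa [bξ, bη] using hU)
    exact ⟨hUU, hUU', fun j => by rw [he j, hf j, comp_rankOne_comp_adjoint, hU]⟩

/-- **Lemma 2.1.** Given two families of pairwise orthogonal rank-one orthogonal
projections on an `n`-dimensional complex Hilbert space, each summing to the identity,
such that `e i * f j ≠ 0` whenever `i` or `j` is the first index, there exist
orthonormal bases `ξ`, `η` with `e j (ξ j) = ξ j`, `f j (η j) = η j` and
`⟪ξ j, η i⟫ > 0` whenever `i` or `j` is the first index; this pair of bases is unique
up to an overall phase, and the unique (unitary) operator `U` with `U (ξ j) = η j`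
satisfies `U ∘ e j ∘ U* = f j`. -/
theorem stmt0 {n : ℕ} (hn : 0 < n) {H : Type} [NormedAddCommGroup H]
    [InnerProductSpace ℂ H] [FiniteDimensional ℂ H]
    (hdim : Module.finrank ℂ H = n)
    (e f : Fin n → H →L[ℂ] H)
    (heI : ∀ j, IsIdempotentElem (e j)) (heS : ∀ j, IsSelfAdjoint (e j))
    (heR : ∀ j, Module.finrank ℂ (LinearMap.range ((e j : H →L[ℂ] H) : H →ₗ[ℂ] H)) = 1)
    (heO : ∀ i j, i ≠ j → e i * e j = 0) (heSum : ∑ j, e j = 1)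
    (hfI : ∀ j, IsIdempotentElem (f j)) (hfS : ∀ j, IsSelfAdjoint (f j))
    (hfR : ∀ j, Module.finrank ℂ (LinearMap.range ((f j : H →L[ℂ] H) : H →ₗ[ℂ] H)) = 1)
    (hfO : ∀ i j, i ≠ j → f i * f j = 0) (hfSum : ∑ j, f j = 1)
    (hgen : ∀ i j : Fin n, (i = ⟨0, hn⟩ ∨ j = ⟨0, hn⟩) → e i * f j ≠ 0) :
    ∃ ξ η : Fin n → H,
      (Orthonormal ℂ ξ ∧ Submodule.span ℂ (Set.range ξ) = ⊤) ∧
      (Orthonormal ℂ η ∧ Submodule.span ℂ (Set.range η) = ⊤) ∧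
      (∀ j, e j (ξ j) = ξ j) ∧ (∀ j, f j (η j) = η j) ∧
      (∀ i j : Fin n, (i = ⟨0, hn⟩ ∨ j = ⟨0, hn⟩) → IsPosReal ⟪ξ j, η i⟫) ∧
      (∀ ξ' η' : Fin n → H,
        Orthonormal ℂ ξ' → Submodule.span ℂ (Set.range ξ') = ⊤ →
        Orthonormal ℂ η' → Submodule.span ℂ (Set.range η') = ⊤ →
        (∀ j, e j (ξ' j) = ξ' j) → (∀ j, f j (η' j) = η' j) →
        (∀ i j : Fin n, (i = ⟨0, hn⟩ ∨ j = ⟨0, hn⟩) → IsPosReal ⟪ξ' j, η' i⟫) →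
        ∃ lam : ℂ, ‖lam‖ = 1 ∧ (∀ j, ξ' j = lam • ξ j) ∧ (∀ j, η' j = lam • η j)) ∧
      (∃! U : H →L[ℂ] H, ∀ j, U (ξ j) = η j) ∧
      (∀ U : H →L[ℂ] H, (∀ j, U (ξ j) = η j) →
        (ContinuousLinearMap.adjoint U ∘L U = 1 ∧ U ∘L ContinuousLinearMap.adjoint U = 1 ∧
          ∀ j, U ∘L e j ∘L ContinuousLinearMap.adjoint U = f j)) :=
  stmt0_general hn e f heI heS heR heO heSum hfI hfS hfR hfO hfSum hgen
end
end

section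
/- Let H be an n-dimensional complex Hilbert space and let ((e_x)_{x∈X}, (f_y)_{y∈Y}, x₀, y₀) be a generic labelled pair of maximal abelian subalgebras with base points. Choose unit vectors ξ, η with e_{x₀}ξ = ξ, f_{y₀}η = η and ⟨ξ, η⟩ > 0; for each x ∈ X let ξ_x be the unique unit vector with e_x ξ_x = ξ_x and ⟨ξ_x, η⟩ > 0, and for each y ∈ Y let η_y be the unique unit vector with f_y η_y = η_y and ⟨ξ, η_y⟩ > 0. Then the matrix C_{xy} = ⟨ξ_x, η_y⟩ is independent of the choice of the normalized pair (ξ, η), the matrix C = (C_{xy}) is unitary, and all entries of its row indexed by x₀ and of its column indexed by y₀ are strictly positive real numbers. -/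
noncomputable section

open scoped ComplexInnerProductSpace ComplexConjugate

variable {H : Type} [NormedAddCommGroup H] [InnerProductSpace ℂ H] [FiniteDimensional ℂ H]
variable {X Y : Type} [Fintype X] [Fintype Y] [DecidableEq X] [DecidableEq Y]

/-- A family of pairwise orthogonal rank-one orthogonal projections summing to
the identity. -/
def IsProjFamily (e : X → H →L[ℂ] H) : Prop :=
  (∀ x, IsIdempotentElem (e x)) ∧ (∀ x, IsSelfAdjoint (e x)) ∧
  (∀ x, Module.finrank ℂ (LinearMap.range ((e x : H →L[ℂ] H) : H →ₗ[ℂ] H)) = 1) ∧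
  (∀ x x', x ≠ x' → e x * e x' = 0) ∧ (∑ x, e x = 1)

/-- Genericity of a labelled pair with base points: `Tr (e x₀ * f y) > 0` for all `y`
and `Tr (e x * f y₀) > 0` for all `x`. -/
def IsGeneric (e : X → H →L[ℂ] H) (f : Y → H →L[ℂ] H) (x₀ : X) (y₀ : Y) : Prop :=
  (∀ y, IsPosReal (LinearMap.trace ℂ H ((e x₀ * f y : H →L[ℂ] H) : H →ₗ[ℂ] H))) ∧
  (∀ x, IsPosReal (LinearMap.trace ℂ H ((e x * f y₀ : H →L[ℂ] H) : H →ₗ[ℂ] H)))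

/-- `C` is the CKM matrix of the generic labelled pair `(e, f, x₀, y₀)`: there are unit
vectors `ξ, η` with `e x₀ ξ = ξ`, `f y₀ η = η`, `⟪ξ, η⟫ > 0`, and families of unit
vectors `xi x` (resp. `eta y`) fixed by `e x` (resp. `f y`) with `⟪xi x, η⟫ > 0`
(resp. `⟪ξ, eta y⟫ > 0`), such that `C x y = ⟪xi x, eta y⟫`. -/
def IsCKM (e : X → H →L[ℂ] H) (f : Y → H →L[ℂ] H) (x₀ : X) (y₀ : Y)
    (C : X → Y → ℂ) : Prop :=
  ∃ (ξ η : H) (xi : X → H) (eta : Y → H),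
    ‖ξ‖ = 1 ∧ ‖η‖ = 1 ∧ e x₀ ξ = ξ ∧ f y₀ η = η ∧ IsPosReal ⟪ξ, η⟫ ∧
    (∀ x, ‖xi x‖ = 1 ∧ e x (xi x) = xi x ∧ IsPosReal ⟪xi x, η⟫) ∧
    (∀ y, ‖eta y‖ = 1 ∧ f y (eta y) = eta y ∧ IsPosReal ⟪ξ, eta y⟫) ∧
    (∀ x y, C x y = ⟪xi x, eta y⟫)

/-!
A unit vector fixed by a rank-one orthogonal projection is determined up to a phase, and the
positivity conditions fix all phases: changing `(ξ, η)` to `(a • ξ, b • η)` turns `ξ_x` into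
`b • ξ_x` and `η_y` into `a • η_y` with `conj b * a = 1`, so `C` does not change. Since
`(ξ_x)` and `(η_y)` are orthonormal bases, `C` is their change-of-basis matrix, hence
unitary. Positivity comes from `ξ_{x₀} = ξ` and `η_{y₀} = η`.
-/

open scoped ComplexOrder

lemma isPosReal_iff_pos {z : ℂ} : IsPosReal z ↔ 0 < z := by
  rw [Complex.pos_iff, eq_comm]; rfl

lemma IsPosReal.conj {z : ℂ} (hz : IsPosReal z) : IsPosReal (conj z) :=
  ⟨hz.1, by simp [hz.2]⟩

lemma eq_one_of_norm_eq_one_of_isPosReal_mul {w z : ℂ} (hw : ‖w‖ = 1) (hz : IsPosReal z)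
    (hwz : IsPosReal (w * z)) : w = 1 := by
  rw [isPosReal_iff_pos] at hz hwz
  have hw_pos : 0 < w := by simpa [hz.ne'] using div_pos hwz hz
  rw [Complex.eq_coe_norm_of_nonneg hw_pos.le, hw, Complex.ofReal_one]

section RankOne

variable {E : Type*} [NormedAddCommGroup E] [InnerProductSpace ℂ E] [CompleteSpace E]
  {P : E →L[ℂ] E}

lemma IsSelfAdjoint.apply_eq_inner_smul_of_finrank_range_eq_one (hP : IsSelfAdjoint P)
    (hrank : Module.finrank ℂ (LinearMap.range (P : E →ₗ[ℂ] E)) = 1) {u : E} (hu : ‖u‖ = 1)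
    (hPu : P u = u) (v : E) : P v = ⟪u, v⟫ • u := by
  have hu0 : (⟨u, u, hPu⟩ : LinearMap.range (P : E →ₗ[ℂ] E)) ≠ 0 := by
    intro h
    have hu_zero : u = 0 := congrArg Subtype.val h
    simp [hu_zero] at hu
  obtain ⟨c, hc⟩ := (finrank_eq_one_iff_of_nonzero' _ hu0).mp hrank ⟨P v, v, rfl⟩
  replace hc : P v = c • u := (congrArg Subtype.val hc).symm
  have hcoeff : ⟪u, P v⟫ = c := by
    rw [hc, inner_smul_right, inner_self_eq_norm_sq_to_K, hu]; simp
  rw [hc, ← hcoeff, ← hP.isSymmetric.apply_clm, hPu]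

end RankOne

namespace IsProjFamily

variable {E ι : Type} [NormedAddCommGroup E] [InnerProductSpace ℂ E] [FiniteDimensional ℂ E]
  [Fintype ι] {e : ι → E →L[ℂ] E}

lemma apply_eq_inner_smul (he : IsProjFamily e) {x : ι} {u : E} (hu : ‖u‖ = 1)
    (heu : e x u = u) (v : E) : e x v = ⟪u, v⟫ • u :=
  (he.2.1 x).apply_eq_inner_smul_of_finrank_range_eq_one (he.2.2.1 x) hu heu v

lemma exists_smul_of_apply_eq (he : IsProjFamily e) {x : ι} {u v : E} (hu : ‖u‖ = 1)
    (hv : ‖v‖ = 1) (heu : e x u = u) (hev : e x v = v) : ∃ c : ℂ, ‖c‖ = 1 ∧ v = c • u := by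
  have hvu : v = ⟪u, v⟫ • u := hev.symm.trans (he.apply_eq_inner_smul hu heu v)
  refine ⟨_, ?_, hvu⟩
  have := congrArg norm hvu
  rwa [norm_smul, hu, mul_one, hv, eq_comm] at this

lemma eq_smul_of_isPosReal_inner (he : IsProjFamily e) {x : ι} {u v w : E} {c : ℂ}
    (hc : ‖c‖ = 1) (hu : ‖u‖ = 1) (hv : ‖v‖ = 1) (heu : e x u = u) (hev : e x v = v)
    (huw : IsPosReal ⟪u, w⟫) (hvw : IsPosReal ⟪v, c • w⟫) : v = c • u := by
  obtain ⟨d, hd, rfl⟩ := he.exists_smul_of_apply_eq hu hv heu hev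
  rw [inner_smul_left, inner_smul_right, ← mul_assoc] at hvw
  have hdc : conj d * c = 1 :=
    eq_one_of_norm_eq_one_of_isPosReal_mul (by simp [hd, hc]) huw hvw
  have hcc : conj c * c = 1 := by rw [Complex.conj_mul', hc]; simp
  have hc0 : c ≠ 0 := by rintro rfl; simp at hc
  rw [star_injective (mul_right_cancel₀ hc0 (hdc.trans hcc.symm))]

lemma eq_smul_of_isPosReal_inner_right (he : IsProjFamily e) {x : ι} {u v w : E} {c : ℂ}
    (hc : ‖c‖ = 1) (hu : ‖u‖ = 1) (hv : ‖v‖ = 1) (heu : e x u = u) (hev : e x v = v)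
    (hwu : IsPosReal ⟪w, u⟫) (hwv : IsPosReal ⟪c • w, v⟫) : v = c • u :=
  he.eq_smul_of_isPosReal_inner hc hu hv heu hev
    (by simpa only [inner_conj_symm] using hwu.conj)
    (by simpa only [inner_conj_symm] using hwv.conj)

lemma sum_inner_mul_inner (he : IsProjFamily e) {xi : ι → E} (hxi : ∀ x, ‖xi x‖ = 1)
    (hexi : ∀ x, e x (xi x) = xi x) (u v : E) : ∑ x, ⟪u, xi x⟫ * ⟪xi x, v⟫ = ⟪u, v⟫ := by
  have hv : v = ∑ x, ⟪xi x, v⟫ • xi x := calc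
    v = (∑ x, e x) v := by rw [he.2.2.2.2]; rfl
    _ = ∑ x, ⟪xi x, v⟫ • xi x := by
      simp only [FunLike.coe_sum, Finset.sum_apply,
        fun x => he.apply_eq_inner_smul (hxi x) (hexi x) v]
  conv_rhs => rw [hv]
  simp only [inner_sum, inner_smul_right, mul_comm]

lemma orthonormal (he : IsProjFamily e) {xi : ι → E} (hxi : ∀ x, ‖xi x‖ = 1)
    (hexi : ∀ x, e x (xi x) = xi x) : Orthonormal ℂ xi := by
  refine ⟨hxi, fun x₁ x₂ hne => show ⟪xi x₁, xi x₂⟫ = 0 from ?_⟩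
  have hker : e x₁ (xi x₂) = 0 := by
    rw [← hexi x₂]
    simpa using DFunLike.congr_fun (he.2.2.2.1 x₁ x₂ hne) (xi x₂)
  rw [← hexi x₁, (he.2.1 x₁).isSymmetric.apply_clm, hker, inner_zero_right]

end IsProjFamily

namespace IsCKM

variable {E ι κ : Type} [NormedAddCommGroup E] [InnerProductSpace ℂ E] [FiniteDimensional ℂ E]
  {e : ι → E →L[ℂ] E} {f : κ → E →L[ℂ] E} {x₀ : ι} {y₀ : κ}
  {C C' : ι → κ → ℂ}

lemma isPosReal_base_row [Fintype ι] (he : IsProjFamily e) (hC : IsCKM e f x₀ y₀ C) (y : κ) :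
    IsPosReal (C x₀ y) := by
  obtain ⟨ξ, η, xi, eta, hξ, -, heξ, -, hξη, hxi, heta, hCeq⟩ := hC
  have hxi₀ : xi x₀ = (1 : ℂ) • ξ := he.eq_smul_of_isPosReal_inner norm_one hξ (hxi x₀).1
    heξ (hxi x₀).2.1 hξη (by rw [one_smul]; exact (hxi x₀).2.2)
  rw [hCeq, hxi₀, one_smul]
  exact (heta y).2.2

lemma isPosReal_base_col [Fintype κ] (hf : IsProjFamily f) (hC : IsCKM e f x₀ y₀ C) (x : ι) :
    IsPosReal (C x y₀) := by
  obtain ⟨ξ, η, xi, eta, -, hη, -, hfη, hξη, hxi, heta, hCeq⟩ := hC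
  have heta₀ : eta y₀ = (1 : ℂ) • η := hf.eq_smul_of_isPosReal_inner_right norm_one hη
    (heta y₀).1 hfη (heta y₀).2.1 hξη (by rw [one_smul]; exact (heta y₀).2.2)
  rw [hCeq, heta₀, one_smul]
  exact (hxi x).2.2

lemma unique [Fintype ι] [Fintype κ] (he : IsProjFamily e) (hf : IsProjFamily f)
    (hC : IsCKM e f x₀ y₀ C) (hC' : IsCKM e f x₀ y₀ C') : C' = C := by
  obtain ⟨ξ, η, xi, eta, hξ, hη, heξ, hfη, hξη, hxi, heta, hCeq⟩ := hC
  obtain ⟨ξ', η', xi', eta', hξ', hη', heξ', hfη', hξη', hxi', heta', hCeq'⟩ := hC'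
  obtain ⟨a, ha, rfl⟩ := he.exists_smul_of_apply_eq hξ hξ' heξ heξ'
  obtain ⟨b, hb, rfl⟩ := hf.exists_smul_of_apply_eq hη hη' hfη hfη'
  have hab : conj a * b = 1 := eq_one_of_norm_eq_one_of_isPosReal_mul (by simp [ha, hb]) hξη
    (by rwa [inner_smul_left, inner_smul_right, ← mul_assoc] at hξη')
  have hxi'_eq : ∀ x, xi' x = b • xi x := fun x =>
    he.eq_smul_of_isPosReal_inner hb (hxi x).1 (hxi' x).1 (hxi x).2.1 (hxi' x).2.1
      (hxi x).2.2 (hxi' x).2.2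
  have heta'_eq : ∀ y, eta' y = a • eta y := fun y =>
    hf.eq_smul_of_isPosReal_inner_right ha (heta y).1 (heta' y).1 (heta y).2.1 (heta' y).2.1
      (heta y).2.2 (heta' y).2.2
  have hba : conj b * a = 1 := by simpa [mul_comm] using congrArg conj hab
  ext x y
  rw [hCeq', hCeq, hxi'_eq, heta'_eq, inner_smul_left, inner_smul_right, ← mul_assoc, hba, one_mul]

lemma sum_conj_mul_apply [Fintype ι] [Fintype κ] [DecidableEq κ]
    (he : IsProjFamily e) (hf : IsProjFamily f) (hC : IsCKM e f x₀ y₀ C) (y₁ y₂ : κ) :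
    ∑ x, conj (C x y₁) * C x y₂ = if y₁ = y₂ then 1 else 0 := by
  obtain ⟨_, _, xi, eta, -, -, -, -, -, hxi, heta, hCeq⟩ := hC
  simp only [hCeq, inner_conj_symm]
  rw [he.sum_inner_mul_inner (fun x => (hxi x).1) (fun x => (hxi x).2.1)]
  exact orthonormal_iff_ite.mp (hf.orthonormal (fun y => (heta y).1) fun y => (heta y).2.1) y₁ y₂

lemma sum_apply_mul_conj [Fintype ι] [Fintype κ] [DecidableEq ι]
    (he : IsProjFamily e) (hf : IsProjFamily f) (hC : IsCKM e f x₀ y₀ C) (x₁ x₂ : ι) :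
    ∑ y, C x₁ y * conj (C x₂ y) = if x₁ = x₂ then 1 else 0 := by
  obtain ⟨_, _, xi, eta, -, -, -, -, -, hxi, heta, hCeq⟩ := hC
  simp only [hCeq, inner_conj_symm]
  rw [hf.sum_inner_mul_inner (fun y => (heta y).1) (fun y => (heta y).2.1)]
  exact orthonormal_iff_ite.mp (he.orthonormal (fun x => (hxi x).1) fun x => (hxi x).2.1) x₁ x₂

end IsCKM

theorem stmt1_general {H : Type} [NormedAddCommGroup H] [InnerProductSpace ℂ H]
    [FiniteDimensional ℂ H]
    {X Y : Type} [Fintype X] [Fintype Y] [DecidableEq X] [DecidableEq Y]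
    (e : X → H →L[ℂ] H) (f : Y → H →L[ℂ] H) (x₀ : X) (y₀ : Y)
    (he : IsProjFamily e) (hf : IsProjFamily f)
    (C : X → Y → ℂ) (hC : IsCKM e f x₀ y₀ C) :
    (∀ C' : X → Y → ℂ, IsCKM e f x₀ y₀ C' → C' = C) ∧
    (∀ y₁ y₂ : Y, ∑ x, conj (C x y₁) * C x y₂ = if y₁ = y₂ then 1 else 0) ∧
    (∀ x₁ x₂ : X, ∑ y, C x₁ y * conj (C x₂ y) = if x₁ = x₂ then 1 else 0) ∧
    (∀ y, IsPosReal (C x₀ y)) ∧ (∀ x, IsPosReal (C x y₀)) :=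
  ⟨fun _ hC' => hC.unique he hf hC', hC.sum_conj_mul_apply he hf, hC.sum_apply_mul_conj he hf,
    hC.isPosReal_base_row he, hC.isPosReal_base_col hf⟩

/-- **Proposition 2.3 (well-definedness, unitarity, positivity).** For a generic labelled
pair of maximal abelian subalgebras with base points on an `n`-dimensional complex Hilbert
space, the CKM matrix `C x y = ⟪ξ_x, η_y⟫` is independent of the choice of normalized pair,
is a unitary matrix, and the row indexed by `x₀` and the column indexed by `y₀` have
strictly positive real entries. -/
theorem stmt1 {n : ℕ} {H : Type} [NormedAddCommGroup H] [InnerProductSpace ℂ H]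
    [FiniteDimensional ℂ H] (hdim : Module.finrank ℂ H = n)
    {X Y : Type} [Fintype X] [Fintype Y] [DecidableEq X] [DecidableEq Y]
    (hX : Fintype.card X = n) (hY : Fintype.card Y = n)
    (e : X → H →L[ℂ] H) (f : Y → H →L[ℂ] H) (x₀ : X) (y₀ : Y)
    (he : IsProjFamily e) (hf : IsProjFamily f)
    (hgen : IsGeneric e f x₀ y₀)
    (C : X → Y → ℂ) (hC : IsCKM e f x₀ y₀ C) :
    (∀ C' : X → Y → ℂ, IsCKM e f x₀ y₀ C' → C' = C) ∧
    (∀ y₁ y₂ : Y, ∑ x, conj (C x y₁) * C x y₂ = if y₁ = y₂ then 1 else 0) ∧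
    (∀ x₁ x₂ : X, ∑ y, C x₁ y * conj (C x₂ y) = if x₁ = x₂ then 1 else 0) ∧
    (∀ y, IsPosReal (C x₀ y)) ∧ (∀ x, IsPosReal (C x y₀)) :=
  stmt1_general e f x₀ y₀ he hf C hC
end
end

section
/- Let (X, μ) be a standard Borel probability space with μ atomless, let m ≥ 1 be an integer, and let H = L²(X, μ; ℂ^m). Let (ξ_n)_{n∈ℕ} be a Hilbert (orthonormal) basis of H and choose for each n a measurable representative f_n : X → ℂ^m of ξ_n. Define, for x ∈ X, the infinite matrix γ(x) with entries γ_{n,k}(x) = ⟨f_n(x), f_k(x)⟩ (inner product in ℂ^m). Then there exists a μ-null set E ⊆ X such that for all x, y ∈ X \ E and every real number c > 0, if γ_{n,k}(x) = c·γ_{n,k}(y) for all n, k ∈ ℕ, then x = y. In particular, the map x ↦ γ(x) is injective outside a null set, even after moding out by the scaling action of the positive reals. -/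
/-!
Any `g ∈ L²` is the a.e. limit of a subsequence of the partial sums `∑ ⟨ξ n, g⟩ • f n`, and the
pointwise value `‖∑ aₙ • f n x‖²` is a quadratic form in the Gram matrix `γ(x)`. So if
`γ(x) = c • γ(y)` with `c ≠ 0` and `x, y` avoid the exceptional null set of `g`, then
`g x = 0 ↔ g y = 0`. Applying this to `g = 1_A • e` for a countable family of measurable sets `A`
separating the points of the standard Borel space `X` shows `x = y`.
-/

open MeasureTheory Filter Topology Finset
open scoped ComplexInnerProductSpace

theorem MeasureTheory.Lp.coeFn_finset_sum {α E ι : Type*} [MeasurableSpace α] {μ : Measure α}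
    [NormedAddCommGroup E] {p : ENNReal} (s : Finset ι) (g : ι → Lp E p μ) :
    ⇑(∑ i ∈ s, g i) =ᵐ[μ] fun x => ∑ i ∈ s, g i x := by
  classical
  induction s using Finset.induction_on with
  | empty => simpa [Pi.zero_def] using Lp.coeFn_zero E p μ
  | insert i s hi ih =>
    filter_upwards [Lp.coeFn_add (g i) (∑ j ∈ s, g j), ih] with x hadd hs
    rw [Finset.sum_insert hi, hadd, Pi.add_apply, hs, Finset.sum_insert hi]

section Gram

variable {𝕜 E ι : Type*} [RCLike 𝕜] [NormedAddCommGroup E] [InnerProductSpace 𝕜 E]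

theorem inner_sum_smul_self_eq_mul_of_gram_eq {v w : ι → E} {c : 𝕜}
    (h : ∀ n k, inner 𝕜 (v n) (v k) = c * inner 𝕜 (w n) (w k)) (s : Finset ι) (a : ι → 𝕜) :
    inner 𝕜 (∑ n ∈ s, a n • v n) (∑ n ∈ s, a n • v n) =
      c * inner 𝕜 (∑ n ∈ s, a n • w n) (∑ n ∈ s, a n • w n) := by
  simp only [sum_inner, inner_sum, inner_smul_left, inner_smul_right, h, Finset.mul_sum]
  exact sum_congr rfl fun _ _ => sum_congr rfl fun _ _ => by ring

theorem eq_zero_iff_of_tendsto_of_gram_eq {α : Type*} {F : Filter α} [F.NeBot]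
    {v w : ι → E} {c : 𝕜} (hc : c ≠ 0)
    (h : ∀ n k, inner 𝕜 (v n) (v k) = c * inner 𝕜 (w n) (w k)) (s : α → Finset ι) (a : ι → 𝕜)
    {u u' : E} (hv : Tendsto (fun l => ∑ n ∈ s l, a n • v n) F (𝓝 u))
    (hw : Tendsto (fun l => ∑ n ∈ s l, a n • w n) F (𝓝 u')) :
    u = 0 ↔ u' = 0 := by
  have hinner : inner 𝕜 u u = c * inner 𝕜 u' u' :=
    tendsto_nhds_unique (hv.inner hv) <| ((hw.inner hw).const_mul c).congr fun l =>
      (inner_sum_smul_self_eq_mul_of_gram_eq h (s l) a).symm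
  rw [← inner_self_eq_zero (𝕜 := 𝕜), hinner, mul_eq_zero, or_iff_right hc, inner_self_eq_zero]

end Gram

namespace HilbertBasis

variable {α 𝕜 E : Type*} [MeasurableSpace α] {μ : Measure α} [RCLike 𝕜]
  [NormedAddCommGroup E] [InnerProductSpace 𝕜 E]
  {ξ : HilbertBasis ℕ 𝕜 (Lp E 2 μ)} {f : ℕ → α → E}

theorem exists_ae_tendsto_sum_repr_smul (hf : ∀ n, ξ n =ᵐ[μ] f n) (g : Lp E 2 μ) :
    ∃ ns : ℕ → ℕ, ∀ᵐ x ∂μ,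
      Tendsto (fun l => ∑ n ∈ range (ns l), ξ.repr g n • f n x) atTop (𝓝 (g x)) := by
  have hL2 : Tendsto (fun j => ∑ n ∈ range j, ξ.repr g n • ξ n) atTop (𝓝 g) :=
    (ξ.hasSum_repr g).tendsto_sum_nat
  obtain ⟨ns, -, hns⟩ := (tendstoInMeasure_of_tendsto_Lp hL2).exists_seq_tendsto_ae
  have hpartial : ∀ j, ⇑(∑ n ∈ range j, ξ.repr g n • ξ n) =ᵐ[μ]
      fun x => ∑ n ∈ range j, ξ.repr g n • f n x := by
    intro j
    have hterm : ∀ n, ⇑(ξ.repr g n • ξ n) =ᵐ[μ] fun x => ξ.repr g n • f n x := fun n =>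
      (Lp.coeFn_smul _ _).trans ((hf n).fun_comp fun v : E => ξ.repr g n • v)
    filter_upwards [Lp.coeFn_finset_sum (range j) fun n => ξ.repr g n • ξ n,
      ae_all_iff.2 hterm] with x hsum hx
    rw [hsum]
    exact sum_congr rfl fun n _ => hx n
  refine ⟨ns, ?_⟩
  filter_upwards [hns, ae_all_iff.2 hpartial] with x hx hpx
  exact hx.congr fun l => hpx (ns l)

theorem exists_null_forall_mem_iff_of_gram_eq [IsFiniteMeasure μ] [Nontrivial E]
    (hf : ∀ n, ξ n =ᵐ[μ] f n) {A : Set α} (hA : MeasurableSet A) :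
    ∃ N : Set α, μ N = 0 ∧ ∀ x ∉ N, ∀ y ∉ N, ∀ c : 𝕜, c ≠ 0 →
      (∀ n k, inner 𝕜 (f n x) (f k x) = c * inner 𝕜 (f n y) (f k y)) → (x ∈ A ↔ y ∈ A) := by
  obtain ⟨e, he⟩ := exists_ne (0 : E)
  obtain ⟨ns, hns⟩ :=
    exists_ae_tendsto_sum_repr_smul hf (indicatorConstLp 2 hA (measure_ne_top μ A) e)
  have hind := indicatorConstLp_coeFn (p := 2) (hs := hA) (hμs := measure_ne_top μ A) (c := e)
  refine ⟨_, ae_iff.1 (hns.and hind), fun x hx y hy c hc hxy => ?_⟩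
  obtain ⟨hx, hxA⟩ := not_not.1 hx
  obtain ⟨hy, hyA⟩ := not_not.1 hy
  have key := eq_zero_iff_of_tendsto_of_gram_eq hc hxy (fun l => range (ns l)) _
    (hxA ▸ hx) (hyA ▸ hy)
  simpa [Set.indicator_apply_eq_zero, he] using key.not

end HilbertBasis

theorem stmt9_general {X : Type} [MeasurableSpace X] [StandardBorelSpace X]
    (μ : Measure X) [IsProbabilityMeasure μ]
    {m : ℕ} (hm : 0 < m)
    (ξ : HilbertBasis ℕ ℂ (Lp (EuclideanSpace ℂ (Fin m)) 2 μ))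
    (f : ℕ → X → EuclideanSpace ℂ (Fin m))
    (hrepr : ∀ n, (ξ n : X → EuclideanSpace ℂ (Fin m)) =ᵐ[μ] f n) :
    ∃ E : Set X, μ E = 0 ∧
      ∀ x ∉ E, ∀ y ∉ E, ∀ c : ℝ, 0 < c →
        (∀ n k : ℕ, ⟪f n x, f k x⟫ = (c : ℂ) * ⟪f n y, f k y⟫) → x = y := by
  obtain ⟨A, hAm, hAsep⟩ := exists_seq_separating X MeasurableSet.univ Set.univ
  have : NeZero m := ⟨hm.ne'⟩
  choose N hN0 hN using fun i => ξ.exists_null_forall_mem_iff_of_gram_eq hrepr (hAm i)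
  refine ⟨⋃ i, N i, measure_iUnion_null hN0, fun x hx y hy c hc hxy => ?_⟩
  simp only [Set.mem_iUnion, not_exists] at hx hy
  exact hAsep x trivial y trivial fun i =>
    hN i x (hx i) y (hy i) c (by exact_mod_cast hc.ne') hxy

/-- **Lemma 3.4.** Let `(X, μ)` be an atomless standard Borel probability space,
`H = L²(X, μ; ℂᵐ)`, `(ξ n)` a Hilbert basis of `H` with measurable representatives
`f n`. Then the matrix-valued map `x ↦ (⟪f n x, f k x⟫)_{n,k}` is injective outside a
`μ`-null set, even after moding out by the scaling action of the positive reals. -/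
theorem stmt9 {X : Type} [MeasurableSpace X] [StandardBorelSpace X]
    (μ : Measure X) [IsProbabilityMeasure μ] [NullSingletonClass μ]
    {m : ℕ} (hm : 0 < m)
    (ξ : HilbertBasis ℕ ℂ (Lp (EuclideanSpace ℂ (Fin m)) 2 μ))
    (f : ℕ → X → EuclideanSpace ℂ (Fin m))
    (hmeas : ∀ n, StronglyMeasurable (f n))
    (hrepr : ∀ n, (ξ n : X → EuclideanSpace ℂ (Fin m)) =ᵐ[μ] f n) :
    ∃ E : Set X, μ E = 0 ∧
      ∀ x ∉ E, ∀ y ∉ E, ∀ c : ℝ, 0 < c →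
        (∀ n k : ℕ, ⟪f n x, f k x⟫ = (c : ℂ) * ⟪f n y, f k y⟫) → x = y :=
  stmt9_general μ hm ξ f hrepr
end

section
/- Let G be a finite group, H a subgroup of G, and g ∈ G. Consider the action of g on the left-coset space H\G given by right translation, Hx ↦ Hxg, and let Fix(g) be the number of cosets fixed by g. Let [g] denote the conjugacy class of g in G. Then Fix(g) · |H| · |[g]| = |G| · |[g] ∩ H|, where |[g] ∩ H| is the number of elements of H that are conjugate in G to g. -/
/-- Right translation by `g` on the space `H\G` of left cosets (the quotient of `G` by
the right-coset relation `a ≈ b ↔ b * a⁻¹ ∈ H`): `H x ↦ H x g`. -/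
def cosetMul {G : Type*} [Group G] (H : Subgroup G) (g : G)
    (c : Quotient (QuotientGroup.rightRel H)) : Quotient (QuotientGroup.rightRel H) :=
  Quotient.map' (· * g)
    (fun a b hab => by
      have h : b * a⁻¹ ∈ H := QuotientGroup.rightRel_apply.mp hab
      exact QuotientGroup.rightRel_apply.mpr (by simpa [mul_inv_rev, mul_assoc] using h)) c

private lemma fiberCount {α β : Type} [Finite α] [Finite β] (f : α → β) (p : β → Prop) (k : ℕ)
    (h1 : ∀ b, p b → Nat.card {a // f a = b} = k) (h2 : ∀ a, p (f a)) :
    Nat.card α = Nat.card {b // p b} * k := by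
  classical
  cases nonempty_fintype β
  cases nonempty_fintype α
  have key : ∀ b : β, Nat.card {a // f a = b} = if p b then k else 0 := by
    intro b
    by_cases hb : p b
    · simp only [hb, if_true]; exact h1 b hb
    · simp only [hb, if_false]
      have : IsEmpty {a // f a = b} := ⟨fun a => hb (a.2 ▸ h2 a.1)⟩
      exact Nat.card_of_isEmpty
  rw [← Nat.card_congr (Equiv.sigmaFiberEquiv f)]
  rw [Nat.card_eq_fintype_card, Fintype.card_sigma]
  simp_rw [← Nat.card_eq_fintype_card, key]
  rw [← Finset.sum_filter, Finset.sum_const, smul_eq_mul,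
    Nat.card_eq_fintype_card, Fintype.card_subtype]

private lemma fixed_iff {G : Type} [Group G] (H : Subgroup G) (g x : G) :
    cosetMul H g (Quotient.mk'' x) = Quotient.mk'' x ↔ x * g * x⁻¹ ∈ H := by
  show Quotient.mk'' (x * g) = Quotient.mk'' x ↔ _
  rw [Quotient.eq'', QuotientGroup.rightRel_apply]
  have : x * (x * g)⁻¹ = (x * g * x⁻¹)⁻¹ := by group
  rw [this, H.inv_mem_iff]

private lemma fiber_card {G : Type} [Group G] (g y : G) (x₀ : G) (h₀ : x₀ * g * x₀⁻¹ = y) :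
    Nat.card {x : G // x * g * x⁻¹ = y} = Nat.card {z : G // z * g * z⁻¹ = g} := by
  refine Nat.card_congr ⟨fun x => ⟨x₀⁻¹ * x.1, ?_⟩, fun z => ⟨x₀ * z.1, ?_⟩, ?_, ?_⟩
  · have hx := x.2
    have : x₀⁻¹ * x.1 * g * (x₀⁻¹ * x.1)⁻¹ = x₀⁻¹ * (x.1 * g * x.1⁻¹) * x₀ := by group
    rw [this, hx, ← h₀]; group
  · have hz := z.2
    have : x₀ * z.1 * g * (x₀ * z.1)⁻¹ = x₀ * (z.1 * g * z.1⁻¹) * x₀⁻¹ := by group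
    rw [this, hz, h₀]
  · intro x; ext; simp [mul_assoc]
  · intro z; ext; simp [mul_assoc]


/-- **Formula (charofres1).** For a finite group `G`, a subgroup `H` and `g ∈ G`, the
number `Fix(g)` of left cosets in `H\G` fixed by right translation by `g` satisfies
`Fix(g) · |H| · |[g]| = |G| · |[g] ∩ H|`, where `[g]` is the conjugacy class of `g`. -/
theorem stmt10 {G : Type} [Group G] [Fintype G] (H : Subgroup G) (g : G) :
    Nat.card {c : Quotient (QuotientGroup.rightRel H) // cosetMul H g c = c} *
        Nat.card H * Nat.card {y : G | ∃ x : G, x * g * x⁻¹ = y} =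
      Nat.card G * Nat.card ({y : G | ∃ x : G, x * g * x⁻¹ = y} ∩ (H : Set G) : Set G) := by
  classical
  set n := Nat.card {z : G // z * g * z⁻¹ = g} with hn
  -- S : elements x with x g x⁻¹ ∈ H
  have hA : Nat.card {x : G // x * g * x⁻¹ ∈ H} =
      Nat.card {c : Quotient (QuotientGroup.rightRel H) // cosetMul H g c = c} * Nat.card H := by
    refine fiberCount (fun x => Quotient.mk'' x.1) (fun c => cosetMul H g c = c) (Nat.card H)
      ?_ (fun x => (fixed_iff H g x.1).mpr x.2)
    intro c hc
    induction c using Quotient.inductionOn' with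
    | h x₀ =>
      have hx₀ : x₀ * g * x₀⁻¹ ∈ H := (fixed_iff H g x₀).mp hc
      refine Nat.card_congr ⟨fun x => ⟨x.1.1 * x₀⁻¹, ?_⟩, fun h => ⟨⟨h.1 * x₀, ?_⟩, ?_⟩, ?_, ?_⟩
      · have := x.2
        rw [Quotient.eq'', QuotientGroup.rightRel_apply] at this
        have e : x.1.1 * x₀⁻¹ = (x₀ * x.1.1⁻¹)⁻¹ := by group
        rw [e]; exact H.inv_mem this
      · have : h.1 * x₀ * g * (h.1 * x₀)⁻¹ = h.1 * (x₀ * g * x₀⁻¹) * h.1⁻¹ := by group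
        rw [this]; exact H.mul_mem (H.mul_mem h.2 hx₀) (H.inv_mem h.2)
      · rw [Quotient.eq'', QuotientGroup.rightRel_apply]
        have : x₀ * (h.1 * x₀)⁻¹ = h.1⁻¹ := by group
        rw [this]; exact H.inv_mem h.2
      · intro x; ext; simp [mul_assoc]
      · intro h; ext; simp [mul_assoc]
  have hB : Nat.card G =
      Nat.card {y : G // y ∈ {y : G | ∃ x : G, x * g * x⁻¹ = y}} * n := by
    refine fiberCount (fun x => x * g * x⁻¹) _ n ?_ (fun x => ⟨x, rfl⟩)
    rintro y ⟨x₀, hx₀⟩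
    exact fiber_card g y x₀ hx₀
  have hC : Nat.card {x : G // x * g * x⁻¹ ∈ H} =
      Nat.card {y : G // y ∈ ({y : G | ∃ x : G, x * g * x⁻¹ = y} ∩ (H : Set G) : Set G)} * n := by
    refine fiberCount (fun x => x.1 * g * x.1⁻¹) _ n ?_ (fun x => ⟨⟨x.1, rfl⟩, x.2⟩)
    rintro y ⟨⟨x₀, hx₀⟩, hyH⟩
    exact (Nat.card_congr ⟨fun x => ⟨x.1.1, x.2⟩, fun x => ⟨⟨x.1, by rw [x.2]; exact hyH⟩, x.2⟩,
      fun x => rfl, fun x => rfl⟩).trans (fiber_card g y x₀ hx₀)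
  have eB : Nat.card {y : G | ∃ x : G, x * g * x⁻¹ = y} =
      Nat.card {y : G // y ∈ {y : G | ∃ x : G, x * g * x⁻¹ = y}} := rfl
  have eC : Nat.card ({y : G | ∃ x : G, x * g * x⁻¹ = y} ∩ (H : Set G) : Set G) =
      Nat.card {y : G // y ∈ ({y : G | ∃ x : G, x * g * x⁻¹ = y} ∩ (H : Set G) : Set G)} := rfl
  rw [eB, eC, ← hA, hB, hC]
  ring
end

section
/- Let G be a finite group and H₁, H₂ subgroups of G such that for every g ∈ G the conjugacy class [g] satisfies |[g] ∩ H₁| = |[g] ∩ H₂|. Then the permutation representations of G over ℂ on the left-coset spaces H₁\G and H₂\G (with G acting by right translation Hx ↦ Hxg⁻¹, linearized on the free ℂ-vector spaces on the cosets) are isomorphic as representations of G. -/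
noncomputable section

open Finset Module

theorem LinearMap.trace_funLeft {k X : Type*} [CommRing k] [Fintype X] [DecidableEq X]
    (f : X → X) : trace k (X → k) (funLeft k k f) = #{x | f x = x} := by
  rw [trace_eq_matrix_trace k (Pi.basisFun k X), Matrix.trace]
  simp [funLeft_apply, Pi.single_apply, Finset.sum_boole]

theorem Finset.card_eq_mul_of_card_fiber_eq {α β : Type*} [DecidableEq β] {s : Finset α}
    {t : Finset β} {f : α → β} (hf : ∀ a ∈ s, f a ∈ t) (n : ℕ)
    (hn : ∀ b ∈ t, #{a ∈ s | f a = b} = n) : #s = #t * n := by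
  rw [card_eq_sum_card_fiberwise hf, sum_congr rfl hn, sum_const, smul_eq_mul]

namespace Subrepresentation

variable {k G V : Type*} [Field k] [Monoid G] [AddCommGroup V] [Module k V]
  {ρ : Representation k G V}

theorem isCompl_toSubmodule {U K : Subrepresentation ρ} (h : IsCompl U K) :
    IsCompl U.toSubmodule K.toSubmodule := by
  constructor
  · rw [disjoint_iff, ← toSubmodule_inf, h.inf_eq_bot]; rfl
  · rw [codisjoint_iff, ← toSubmodule_sup, h.sup_eq_top]; rfl

def prodEquivOfIsCompl {U K : Subrepresentation ρ} (h : IsCompl U K) :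
    (U.toRepresentation.prod K.toRepresentation).Equiv ρ :=
  .mk (Submodule.prodEquivOfIsCompl _ _ (isCompl_toSubmodule h)) fun g => by
    ext <;> simp [toRepresentation]

end Subrepresentation

namespace Representation

section Monoid

variable {k G V W V' W' : Type*} [Field k] [Monoid G]
  [AddCommGroup V] [Module k V] [AddCommGroup W] [Module k W]
  [AddCommGroup V'] [Module k V'] [AddCommGroup W'] [Module k W']

namespace IntertwiningMap

variable {ρ : Representation k G V} {σ : Representation k G W}

def equivRangeOfIsCompl (f : IntertwiningMap ρ σ) {K : Subrepresentation ρ}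
    (h : IsCompl f.ker K) : K.toRepresentation.Equiv f.range.toRepresentation :=
  .mk ((Submodule.quotientEquivOfIsCompl _ _ (Subrepresentation.isCompl_toSubmodule h)).symm.trans
      f.toLinearMap.quotKerEquivRange) fun g =>
    LinearMap.ext fun v => Subtype.ext (IntertwiningMap.isIntertwining ρ σ f g v)

end IntertwiningMap

theorem char_prod [FiniteDimensional k V] [FiniteDimensional k W]
    (ρ : Representation k G V) (σ : Representation k G W) :
    (ρ.prod σ).character = ρ.character + σ.character := by
  ext g
  exact LinearMap.trace_prodMap' (ρ g) (σ g)

def Equiv.prodCongr {ρ : Representation k G V} {ρ' : Representation k G V'}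
    {σ : Representation k G W} {σ' : Representation k G W'}
    (e₁ : ρ.Equiv ρ') (e₂ : σ.Equiv σ') : (ρ.prod σ).Equiv (ρ'.prod σ') :=
  .mk (e₁.toLinearEquiv.prodCongr e₂.toLinearEquiv) fun g => by
    ext <;> simp [IntertwiningMap.isIntertwining]

end Monoid

variable {k G V W : Type*} [Field k] [Group G] [Fintype G] [CharZero k]
  [AddCommGroup V] [Module k V] [FiniteDimensional k V]
  [AddCommGroup W] [Module k W] [FiniteDimensional k W]
  {ρ : Representation k G V} {σ : Representation k G W}

theorem finrank_intertwiningMap_eq_of_character_eq (h : ρ.character = σ.character) :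
    finrank k (IntertwiningMap ρ σ) = finrank k (IntertwiningMap ρ ρ) := by
  let : Invertible (Nat.card G : k) := invertibleOfNonzero (NeZero.ne _)
  have hσ := card_inv_mul_sum_char_mul_char_eq_finrank ρ σ
  rw [← h] at hσ
  exact_mod_cast hσ.symm.trans (card_inv_mul_sum_char_mul_char_eq_finrank ρ ρ)

theorem exists_intertwiningMap_ne_zero_of_character_eq [Nontrivial V]
    (h : ρ.character = σ.character) : ∃ f : IntertwiningMap ρ σ, f ≠ 0 := by
  have : Nontrivial (IntertwiningMap ρ ρ) := by
    obtain ⟨v, hv⟩ := exists_ne (0 : V)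
    exact nontrivial_of_ne 1 0 fun h1 => hv congr($h1 v)
  have hpos : 0 < finrank k (IntertwiningMap ρ σ) := by
    rw [finrank_intertwiningMap_eq_of_character_eq h]
    exact finrank_pos
  have := Module.nontrivial_of_finrank_pos hpos
  exact exists_ne 0

theorem nonempty_equiv_of_character_eq (h : ρ.character = σ.character) :
    Nonempty (ρ.Equiv σ) := by
  induction hn : finrank k V using Nat.strong_induction_on generalizing V W with
  | _ n ih =>
    rcases subsingleton_or_nontrivial V with _ | _
    · have hW : (finrank k W : k) = 0 := by
        rw [← char_one σ, ← h, char_one, finrank_zero_of_subsingleton, Nat.cast_zero]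
      have : Subsingleton W := finrank_zero_iff.mp (mod_cast hW)
      exact ⟨.mk (LinearEquiv.ofSubsingleton V W) fun g => Subsingleton.elim _ _⟩
    obtain ⟨f, hf⟩ := exists_intertwiningMap_ne_zero_of_character_eq h
    obtain ⟨K, hK⟩ := exists_isCompl f.ker
    obtain ⟨C, hC⟩ := exists_isCompl f.range
    let eV := Subrepresentation.prodEquivOfIsCompl hK
    let eW := Subrepresentation.prodEquivOfIsCompl hC.symm
    let eK := f.equivRangeOfIsCompl hK
    have hchar : f.ker.toRepresentation.character = C.toRepresentation.character := by
      rw [← char_iso eV, ← char_iso eW, char_prod, char_prod, char_iso eK] at h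
      exact add_right_cancel h
    have hlt : finrank k f.ker.toSubmodule < n := by
      rw [← hn]
      refine Submodule.finrank_lt ?_
      rw [IntertwiningMap.ker_toSubmodule, Ne, LinearMap.ker_eq_top]
      exact fun h0 => hf (IntertwiningMap.ext h0)
    obtain ⟨eN⟩ := ih _ hlt hchar rfl
    exact ⟨eV.symm.trans ((Equiv.prodCongr eN eK).trans eW)⟩

end Representation

section CosetSpace

variable {G : Type*} [Group G] (H : Subgroup G)

@[simp]
theorem cosetMul_mk (g x : G) :
    cosetMul H g (Quotient.mk'' x) = Quotient.mk'' (x * g) := rfl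

theorem rightRel_mk_eq_mk_iff {x y : G} :
    (Quotient.mk'' x : Quotient (QuotientGroup.rightRel H)) = Quotient.mk'' y ↔ y * x⁻¹ ∈ H :=
  Quotient.eq''.trans QuotientGroup.rightRel_apply

theorem cosetMul_one (c : Quotient (QuotientGroup.rightRel H)) : cosetMul H 1 c = c := by
  induction c using Quotient.inductionOn' with
  | h x => simp

theorem cosetMul_mul (g h : G) (c : Quotient (QuotientGroup.rightRel H)) :
    cosetMul H (g * h) c = cosetMul H h (cosetMul H g c) := by
  induction c using Quotient.inductionOn' with
  | h x => simp [mul_assoc]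

theorem cosetMul_mk_eq_self_iff (g x : G) :
    cosetMul H g (Quotient.mk'' x) = Quotient.mk'' x ↔ x * g * x⁻¹ ∈ H := by
  rw [cosetMul_mk, rightRel_mk_eq_mk_iff, ← inv_mem_iff]
  group

def cosetRep (k : Type*) [CommSemiring k] :
    Representation k G (Quotient (QuotientGroup.rightRel H) → k) where
  toFun g := LinearMap.funLeft k k (cosetMul H g)
  map_one' := by
    ext v c
    simp [LinearMap.funLeft_apply, cosetMul_one]
  map_mul' g h := by
    ext v c
    simp [LinearMap.funLeft_apply, cosetMul_mul]

open scoped Classical in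
theorem character_cosetRep (k : Type*) [Field k] [Fintype G] (g : G) :
    (cosetRep H k).character g = #{c | cosetMul H g c = c} :=
  LinearMap.trace_funLeft _

end CosetSpace

section Counting

open scoped Classical

variable {G : Type*} [Group G] [Fintype G] (H : Subgroup G)

theorem card_filter_rightRel_mk_eq (x₀ : G) :
    #{x | (Quotient.mk'' x : Quotient (QuotientGroup.rightRel H)) = Quotient.mk'' x₀} =
      Nat.card H := by
  rw [← Fintype.card_subtype, Nat.card_eq_fintype_card]
  refine Fintype.card_congr
    { toFun := fun x => ⟨x₀ * x.1⁻¹, (rightRel_mk_eq_mk_iff H).mp x.2⟩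
      invFun := fun h => ⟨h.1⁻¹ * x₀, (rightRel_mk_eq_mk_iff H).mpr (by simp [h.2])⟩
      left_inv := fun x => by simp
      right_inv := fun h => by simp }

theorem card_filter_conj_eq (g x₀ : G) :
    #{x | x * g * x⁻¹ = x₀ * g * x₀⁻¹} = #{z | z * g * z⁻¹ = g} := by
  rw [← Fintype.card_subtype, ← Fintype.card_subtype]
  refine Fintype.card_congr
    { toFun := fun x => ⟨x₀⁻¹ * x.1, ?_⟩
      invFun := fun z => ⟨x₀ * z.1, ?_⟩
      left_inv := fun x => by simp
      right_inv := fun z => by simp }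
  · calc x₀⁻¹ * x.1 * g * (x₀⁻¹ * x.1)⁻¹ = x₀⁻¹ * (x.1 * g * x.1⁻¹) * x₀ := by group
      _ = g := by rw [x.2]; group
  · calc x₀ * z.1 * g * (x₀ * z.1)⁻¹ = x₀ * (z.1 * g * z.1⁻¹) * x₀⁻¹ := by group
      _ = x₀ * g * x₀⁻¹ := by rw [z.2]

theorem card_conj_mem_eq_card_fixed_mul (g : G) :
    #{x | x * g * x⁻¹ ∈ H} = #{c | cosetMul H g c = c} * Nat.card H := by
  refine card_eq_mul_of_card_fiber_eq (f := Quotient.mk'') (fun x hx => ?_) _ fun c hc => ?_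
  · simp only [mem_filter, mem_univ, true_and] at hx ⊢
    exact (cosetMul_mk_eq_self_iff H g x).mpr hx
  · obtain ⟨x₀, rfl⟩ := Quotient.exists_rep c
    rw [filter_filter, ← card_filter_rightRel_mk_eq H x₀]
    refine congrArg card (filter_congr fun x _ => and_iff_right_of_imp fun hx => ?_)
    rw [← cosetMul_mk_eq_self_iff, hx]
    exact (mem_filter.mp hc).2

theorem card_conj_mem_eq_card_inter_mul (g : G) :
    #{x | x * g * x⁻¹ ∈ H} =
      Nat.card ({y | ∃ x : G, x * g * x⁻¹ = y} ∩ (H : Set G) : Set G) *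
        #{z | z * g * z⁻¹ = g} := by
  rw [Nat.card_eq_card_toFinset]
  refine card_eq_mul_of_card_fiber_eq (f := fun x => x * g * x⁻¹) (fun x hx => ?_) _
    fun y hy => ?_
  · simp only [mem_filter, mem_univ, true_and] at hx
    simpa using hx
  · simp only [Set.toFinset_inter, mem_inter, Set.mem_toFinset, Set.mem_ofPred_eq] at hy
    obtain ⟨⟨x₀, rfl⟩, hy⟩ := hy
    rw [filter_filter, ← card_filter_conj_eq g x₀]
    exact congrArg card (filter_congr fun x _ => and_iff_right_of_imp fun hx => hx ▸ hy)

theorem sum_card_conj_mem :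
    ∑ g : G, #{x | x * g * x⁻¹ ∈ H} = Fintype.card G * Nat.card H := by
  calc ∑ g : G, #{x | x * g * x⁻¹ ∈ H} = ∑ x : G, #{g | x * g * x⁻¹ ∈ H} := by
        simp only [card_filter]
        exact sum_comm
    _ = ∑ _x : G, Nat.card H := sum_congr rfl fun x _ => by
        rw [← Fintype.card_subtype, Nat.card_eq_fintype_card]
        exact Fintype.card_congr ((MulAut.conj x).toEquiv.subtypeEquiv fun g => Iff.rfl)
    _ = Fintype.card G * Nat.card H := by simp

theorem card_fixed_cosetMul_eq_of_card_conj_inter_eq (H₁ H₂ : Subgroup G)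
    (hcard : ∀ g : G,
      Nat.card ({y : G | ∃ x : G, x * g * x⁻¹ = y} ∩ (H₁ : Set G) : Set G) =
        Nat.card ({y : G | ∃ x : G, x * g * x⁻¹ = y} ∩ (H₂ : Set G) : Set G))
    (g : G) : #{c | cosetMul H₁ g c = c} = #{c | cosetMul H₂ g c = c} := by
  have hconj (g : G) : #{x | x * g * x⁻¹ ∈ H₁} = #{x | x * g * x⁻¹ ∈ H₂} := by
    rw [card_conj_mem_eq_card_inter_mul, card_conj_mem_eq_card_inter_mul, hcard]
  have hH : Nat.card H₁ = Nat.card H₂ := by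
    have h := sum_card_conj_mem H₁
    rw [sum_congr rfl fun g _ => hconj g, sum_card_conj_mem] at h
    exact (Nat.eq_of_mul_eq_mul_left Fintype.card_pos h).symm
  have h := hconj g
  rw [card_conj_mem_eq_card_fixed_mul, card_conj_mem_eq_card_fixed_mul, hH] at h
  exact Nat.eq_of_mul_eq_mul_right Nat.card_pos h

end Counting

end

/-- **Sunada's Lemma 2.** If two subgroups `H₁, H₂` of a finite group `G` meet every
conjugacy class in the same number of elements, then the permutation representations of
`G` over `ℂ` on the coset spaces `H₁\G` and `H₂\G` (linearized from the right
translation action) are isomorphic: there is a `ℂ`-linear bijection intertwining the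
linearized actions. -/
theorem stmt12 {G : Type} [Group G] [Fintype G] (H₁ H₂ : Subgroup G)
    (hcard : ∀ g : G,
      Nat.card ({y : G | ∃ x : G, x * g * x⁻¹ = y} ∩ (H₁ : Set G) : Set G) =
        Nat.card ({y : G | ∃ x : G, x * g * x⁻¹ = y} ∩ (H₂ : Set G) : Set G)) :
    ∃ T : (Quotient (QuotientGroup.rightRel H₁) → ℂ) ≃ₗ[ℂ]
        (Quotient (QuotientGroup.rightRel H₂) → ℂ),
      ∀ (g : G) (v : Quotient (QuotientGroup.rightRel H₁) → ℂ),
        T (fun c => v (cosetMul H₁ g c)) = fun c => (T v) (cosetMul H₂ g c) := by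
  have hchar : (cosetRep H₁ ℂ).character = (cosetRep H₂ ℂ).character := by
    ext g
    rw [character_cosetRep, character_cosetRep,
      card_fixed_cosetMul_eq_of_card_conj_inter_eq H₁ H₂ hcard g]
  obtain ⟨e⟩ := Representation.nonempty_equiv_of_character_eq hchar
  exact ⟨e.toLinearEquiv, e.toIntertwiningMap.isIntertwining⟩
end

section
/- Let ω = e^{2πi/3}, and set c₁ = 1/√3, s₁ = √(2/3), c₂ = s₂ = 1/√2, c₃ = s₃ = −1/√2, and e_δ = i. Then the 3×3 complex matrix with rows (c₁, −s₁c₃, −s₁s₃), (s₁c₂, c₁c₂c₃ − s₂s₃e_δ, c₁c₂s₃ + s₂c₃e_δ), (s₁s₂, c₁s₂c₃ + c₂s₃e_δ, c₁s₂s₃ − c₂c₃e_δ) equals the normalized Fourier matrix (1/√3)·[[1,1,1],[1,ω,ω⁻¹],[1,ω⁻¹,ω]]. -/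
noncomputable section

open Matrix Complex

/-- **Section 2.4.** The Kobayashi–Maskawa parametrization evaluated at
`cos θ₁ = 1/√3`, `sin θ₁ = √(2/3)`, `cos θ₂ = sin θ₂ = 1/√2`,
`cos θ₃ = sin θ₃ = -1/√2`, `e^{iδ} = i` equals the normalized Fourier matrix
`(1/√3)·[[1,1,1],[1,ω,ω⁻¹],[1,ω⁻¹,ω]]` with `ω = e^{2πi/3}`. -/
theorem stmt18 :
    let ω : ℂ := Complex.exp (2 * Real.pi * Complex.I / 3)
    let c₁ : ℂ := (1 / Real.sqrt 3 : ℝ)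
    let s₁ : ℂ := (Real.sqrt (2 / 3) : ℝ)
    let c₂ : ℂ := (1 / Real.sqrt 2 : ℝ)
    let s₂ : ℂ := (1 / Real.sqrt 2 : ℝ)
    let c₃ : ℂ := (-(1 / Real.sqrt 2) : ℝ)
    let s₃ : ℂ := (-(1 / Real.sqrt 2) : ℝ)
    let eδ : ℂ := Complex.I
    !![c₁, -s₁ * c₃, -s₁ * s₃;
       s₁ * c₂, c₁ * c₂ * c₃ - s₂ * s₃ * eδ, c₁ * c₂ * s₃ + s₂ * c₃ * eδ;
       s₁ * s₂, c₁ * s₂ * c₃ + c₂ * s₃ * eδ, c₁ * s₂ * s₃ - c₂ * c₃ * eδ] =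
      ((1 / Real.sqrt 3 : ℝ) : ℂ) • !![1, 1, 1; 1, ω, ω⁻¹; 1, ω⁻¹, ω] := by
  intro ω c₁ s₁ c₂ s₂ c₃ s₃ eδ
  have hω : ω = (-1 + Real.sqrt 3 * Complex.I) / 2 := by
    show Complex.exp _ = _
    have h : (2 * Real.pi * Complex.I / 3) = ((Real.pi - Real.pi/3 : ℝ) : ℂ) * Complex.I := by
      push_cast; ring
    rw [h, Complex.exp_mul_I, ← Complex.ofReal_cos, ← Complex.ofReal_sin,
      Real.cos_pi_sub, Real.sin_pi_sub, Real.cos_pi_div_three, Real.sin_pi_div_three]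
    push_cast; ring
  have h3 : (Real.sqrt 3 : ℂ) * Real.sqrt 3 = 3 := by
    exact_mod_cast Real.mul_self_sqrt (by norm_num : (0:ℝ) ≤ 3)
  have h2 : (Real.sqrt 2 : ℂ) * Real.sqrt 2 = 2 := by
    exact_mod_cast Real.mul_self_sqrt (by norm_num : (0:ℝ) ≤ 2)
  have hinv : ω⁻¹ = (-1 - Real.sqrt 3 * Complex.I) / 2 := by
    rw [hω, eq_comm]
    apply eq_inv_of_mul_eq_one_left
    linear_combination (-Complex.I^2/4) * h3 + (-3/4) * Complex.I_sq
  have hs : (Real.sqrt (2/3) : ℂ) = Real.sqrt 2 / Real.sqrt 3 := by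
    norm_cast
    exact Real.sqrt_div (by norm_num : (0:ℝ) ≤ 2) 3
  have h2ne : (Real.sqrt 2 : ℂ) ≠ 0 := by
    simp [Real.sqrt_eq_zero', Complex.ofReal_eq_zero]
  have h3ne : (Real.sqrt 3 : ℂ) ≠ 0 := by
    simp [Real.sqrt_eq_zero', Complex.ofReal_eq_zero]
  rw [hinv, hω]
  show !![c₁, -s₁ * c₃, -s₁ * s₃;
       s₁ * c₂, c₁ * c₂ * c₃ - s₂ * s₃ * eδ, c₁ * c₂ * s₃ + s₂ * c₃ * eδ;
       s₁ * s₂, c₁ * s₂ * c₃ + c₂ * s₃ * eδ, c₁ * s₂ * s₃ - c₂ * c₃ * eδ] = _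
  simp only [c₁, s₁, c₂, s₂, c₃, s₃, eδ]
  ext i j
  have h2' : (Real.sqrt 2 : ℂ)^2 = 2 := by rw [sq]; exact h2
  have h3' : (Real.sqrt 3 : ℂ)^2 = 3 := by rw [sq]; exact h3
  fin_cases i <;> fin_cases j <;>
    simp [Matrix.smul_apply, hs, Matrix.vecHead, Matrix.vecTail] <;>
    field_simp <;> ring_nf <;>
    simp only [show ((Real.sqrt 2:ℝ):ℂ)^4 = (((Real.sqrt 2:ℝ):ℂ)^2)^2 from by ring,
      show ((Real.sqrt 3:ℝ):ℂ)^4 = (((Real.sqrt 3:ℝ):ℂ)^2)^2 from by ring,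
      show ((Real.sqrt 2:ℝ):ℂ)^3 = (((Real.sqrt 2:ℝ):ℂ)^2)*((Real.sqrt 2:ℝ):ℂ) from by ring,
      show ((Real.sqrt 3:ℝ):ℂ)^3 = (((Real.sqrt 3:ℝ):ℂ)^2)*((Real.sqrt 3:ℝ):ℂ) from by ring,
      h2', h3', Complex.I_sq] <;> ring_nf
end
end
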